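/- Let V be a finite-dimensional real inner product space, let Δ ⊆ V be a closed convex set with 0 ∈ Δ, and let ∇ := {x ∈ V | ⟨u, x⟩ ≥ −1 for all u ∈ Δ} be its polar. Equip V × ℝ with the inner product ⟨(v, s), (x, t)⟩ = ⟨v, x⟩ + s·t, and for a set S ⊆ V define the closed cone C(S) := closure({r•(v, 1) | r ≥ 0, v ∈ S}) ⊆ V × ℝ. Then C(∇) equals the dual cone of C(Δ), i.e., C(∇) = {(x, t) ∈ V × ℝ | ⟨w, x⟩ + s·t ≥ 0 for all (w, s) ∈ C(Δ)}. -/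

import Mathlib

open RealInnerProductSpace

/-- The closed cone over a set `S ⊆ V` at height `1` in `V × ℝ`:
`C(S) = closure{r • (v, 1) | r ≥ 0, v ∈ S}`. -/
def closedConeOver {V : Type*} [NormedAddCommGroup V] [InnerProductSpace ℝ V]
    (S : Set V) : Set (V × ℝ) :=
  closure {p : V × ℝ | ∃ r : ℝ, 0 ≤ r ∧ ∃ v ∈ S, p = r • ((v, 1) : V × ℝ)}

/-!
The generators `r • (u, 1)` of `C(Δ)` and `s • (v, 1)` of `C(∇)` pair to `r s (⟪u, v⟫ + 1) ≥ 0`,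
and a dual cone is closed and does not change when its argument is closed, so `C(∇)` lies in the
dual of `C(Δ)`. Conversely, `(x, t)` in the dual pairs nonnegatively with each `(u, 1)`, `u ∈ Δ`,
i.e. `⟪u, x⟫ + t ≥ 0`; taking `u = 0` gives `t ≥ 0`. For `t > 0` this says `x / t ∈ ∇`, so
`(x, t) = t • (x / t, 1)`, and every `(x, s)` with `s > t` is of this kind, hence so is the limit
`(x, t)` of the closed cone.
-/

open Set

section

variable {V : Type*} [NormedAddCommGroup V] [InnerProductSpace ℝ V]

def innerPolar (S : Set V) : Set V :=
  {x | ∀ u ∈ S, ⟪u, x⟫ ≥ -1}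

def prodDualCone (K : Set (V × ℝ)) : Set (V × ℝ) :=
  {q | ∀ p ∈ K, ⟪p.1, q.1⟫ + p.2 * q.2 ≥ 0}

theorem isClosed_prodDualCone (K : Set (V × ℝ)) : IsClosed (prodDualCone K) := by
  simp only [prodDualCone, ofPred_forall]
  exact isClosed_biInter fun p _ => isClosed_le continuous_const (by fun_prop)

theorem prodDualCone_closure (K : Set (V × ℝ)) : prodDualCone (closure K) = prodDualCone K :=
  Subset.antisymm (fun _ hq p hp => hq p (subset_closure hp))
    fun q hq => closure_minimal hq <|
      isClosed_le continuous_const (by fun_prop : Continuous fun p : V × ℝ => ⟪p.1, q.1⟫ + p.2 * q.2)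

theorem smul_mk_one_mem_closedConeOver {S : Set V} {r : ℝ} (hr : 0 ≤ r) {v : V} (hv : v ∈ S) :
    r • ((v, 1) : V × ℝ) ∈ closedConeOver S :=
  subset_closure ⟨r, hr, v, hv, rfl⟩

theorem closedConeOver_innerPolar_subset (Δ : Set V) :
    closedConeOver (innerPolar Δ) ⊆ prodDualCone (closedConeOver Δ) := by
  refine closure_minimal ?_ (isClosed_prodDualCone _)
  rintro _ ⟨s, hs, v, hv, rfl⟩
  rw [closedConeOver, prodDualCone_closure]
  rintro _ ⟨r, hr, u, hu, rfl⟩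
  have hpair : ⟪(r • ((u, 1) : V × ℝ)).1, (s • ((v, 1) : V × ℝ)).1⟫ +
      (r • ((u, 1) : V × ℝ)).2 * (s • ((v, 1) : V × ℝ)).2 = r * s * (⟪u, v⟫ + 1) := by
    simp only [Prod.smul_fst, Prod.smul_snd, smul_eq_mul, real_inner_smul_left,
      real_inner_smul_right]
    ring
  rw [ge_iff_le, hpair]
  exact mul_nonneg (mul_nonneg hr hs) (by linarith [hv u hu])

theorem inner_add_nonneg_of_mem_prodDualCone {Δ : Set V} {q : V × ℝ}
    (hq : q ∈ prodDualCone (closedConeOver Δ)) {u : V} (hu : u ∈ Δ) : 0 ≤ ⟪u, q.1⟫ + q.2 := by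
  simpa using hq _ (smul_mk_one_mem_closedConeOver zero_le_one hu)

theorem mk_mem_closedConeOver_innerPolar_of_pos {Δ : Set V} {x : V} {t : ℝ} (ht : 0 < t)
    (h : ∀ u ∈ Δ, 0 ≤ ⟪u, x⟫ + t) : (x, t) ∈ closedConeOver (innerPolar Δ) := by
  have hpolar : t⁻¹ • x ∈ innerPolar Δ := fun u hu => by
    have hdistrib : t⁻¹ * (⟪u, x⟫ + t) = t⁻¹ * ⟪u, x⟫ + 1 := by field_simp
    rw [real_inner_smul_right]
    linarith [mul_nonneg (inv_nonneg.mpr ht.le) (h u hu)]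
  convert smul_mk_one_mem_closedConeOver ht.le hpolar using 1
  simp [smul_smul, ht.ne']

theorem mk_mem_closedConeOver_innerPolar {Δ : Set V} {x : V} {t : ℝ} (ht : 0 ≤ t)
    (h : ∀ u ∈ Δ, 0 ≤ ⟪u, x⟫ + t) : (x, t) ∈ closedConeOver (innerPolar Δ) := by
  have hclosed : IsClosed {s : ℝ | (x, s) ∈ closedConeOver (innerPolar Δ)} :=
    isClosed_closure.preimage (by fun_prop)
  have hIoi : Ioi t ⊆ {s : ℝ | (x, s) ∈ closedConeOver (innerPolar Δ)} := fun s hs =>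
    mk_mem_closedConeOver_innerPolar_of_pos (ht.trans_lt hs) fun u hu => by
      linarith [h u hu, mem_Ioi.mp hs]
  exact closure_minimal hIoi hclosed (closure_Ioi t ▸ self_mem_Ici)

theorem prodDualCone_closedConeOver_subset {Δ : Set V} (h0 : (0 : V) ∈ Δ) :
    prodDualCone (closedConeOver Δ) ⊆ closedConeOver (innerPolar Δ) := by
  rintro ⟨x, t⟩ hq
  have h := fun u (hu : u ∈ Δ) => inner_add_nonneg_of_mem_prodDualCone hq hu
  exact mk_mem_closedConeOver_innerPolar (by simpa using h 0 h0) h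

end

theorem closedConeOver_polar_eq_dualCone_general
    {V : Type*} [NormedAddCommGroup V] [InnerProductSpace ℝ V]
    (Δ : Set V) (h0 : (0 : V) ∈ Δ) :
    closedConeOver {x : V | ∀ u ∈ Δ, ⟪u, x⟫ ≥ -1} =
      {q : V × ℝ | ∀ p ∈ closedConeOver Δ, ⟪p.1, q.1⟫ + p.2 * q.2 ≥ 0} :=
  Subset.antisymm (closedConeOver_innerPolar_subset Δ) (prodDualCone_closedConeOver_subset h0)

/-- **(4.1 dualPol).** For a closed convex set `Δ ∋ 0` with polar `∇`, the cone
`C(∇)` is the dual cone of `C(Δ)` with respect to the product pairing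
`⟨(v,s),(x,t)⟩ = ⟨v,x⟩ + s·t` on `V × ℝ`. -/
theorem closedConeOver_polar_eq_dualCone
    {V : Type*} [NormedAddCommGroup V] [InnerProductSpace ℝ V]
    [FiniteDimensional ℝ V]
    (Δ : Set V) (hcl : IsClosed Δ) (hconv : Convex ℝ Δ) (h0 : (0 : V) ∈ Δ) :
    closedConeOver {x : V | ∀ u ∈ Δ, ⟪u, x⟫ ≥ -1} =
      {q : V × ℝ | ∀ p ∈ closedConeOver Δ, ⟪p.1, q.1⟫ + p.2 * q.2 ≥ 0} :=
  closedConeOver_polar_eq_dualCone_general Δ h0
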